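/- arXiv:1603.00939 — 5 statements merged into one kernel-verified Lean document; each statement's English description precedes it below -/
import Mathlib

section
/- (Upper bound for outflow via incoming capacity) Suppose there exist feasible customer flows f_m and a feasible rebalancing flow f_R on a capacitated directed graph; then for every subset S ⊆ V, the total customer outflow across the cut is bounded by both the outgoing and the incoming capacity of the cut: F_out(S) ≤ C_out(S) and F_out(S) ≤ C_in(S), where F_out(S) = Σ_m Σ_{u∈S, v∉S} f_m(u,v). -/
/-! For every node, summing the conservation equations of the customer flows and adding the
rebalancing equation cancels all sources and sinks, so the total flow `F = f_R + Σ_m f_m` is a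
circulation. A circulation carries as much across a cut in one direction as in the other, and
`F` dominates the customer flow and is dominated by `c` edgewise; hence the customer outflow
of `S` is at most `F_out(S)`, which is bounded by `C_out(S)` and equals `F_in(S) ≤ C_in(S)`. -/

open Finset

section

variable {V : Type*} [Fintype V]

def IsCirculation {β : Type*} [AddCommMonoid β] (F : V → V → β) : Prop :=
  ∀ v, ∑ u, F u v = ∑ w, F v w

theorem IsCirculation.sum_cut_out_eq_sum_cut_in [DecidableEq V] {β : Type*} [AddCommGroup β]
    {F : V → V → β} (hF : IsCirculation F) (S : Finset V) :
    ∑ u ∈ S, ∑ v ∈ Sᶜ, F u v = ∑ u ∈ Sᶜ, ∑ v ∈ S, F u v := by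
  have h : ∑ v ∈ S, ∑ u, F u v = ∑ v ∈ S, ∑ w, F v w := sum_congr rfl fun v _ => hF v
  simp_rw [← sum_add_sum_compl S, sum_add_distrib] at h
  rw [sum_comm (s := S) (t := S), add_left_cancel_iff] at h
  rw [← h, sum_comm]

theorem isCirculation_add_sum {M : Type*} [Fintype M] (f : M → V → V → ℝ) (fR : V → V → ℝ)
    (a b : M → V → ℝ)
    (hf : ∀ m v, ∑ u, f m u v + a m v = ∑ w, f m v w + b m v)
    (hfR : ∀ v, ∑ u, fR u v + ∑ m, b m v = ∑ w, fR v w + ∑ m, a m v) :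
    IsCirculation fun u v => fR u v + ∑ m, f m u v := by
  intro v
  have hsum : ∑ m, (∑ u, f m u v + a m v) = ∑ m, (∑ w, f m v w + b m v) :=
    sum_congr rfl fun m _ => hf m v
  simp only [sum_add_distrib] at hsum ⊢
  rw [sum_comm (s := univ) (t := univ) (f := fun m u => f m u v),
    sum_comm (s := univ) (t := univ) (f := fun m w => f m v w)] at hsum
  linarith [hfR v]

end

theorem stmt_6_general {V M : Type*} [Fintype V] [DecidableEq V] [Fintype M]
    (c : V → V → ℝ)
    (f : M → V → V → ℝ)
    (s t : M → V) (lam : M → ℝ)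
    (hcons : ∀ m v, (∑ u : V, f m u v) + (if v = s m then lam m else 0) =
      (∑ w : V, f m v w) + (if v = t m then lam m else 0))
    (fR : V → V → ℝ) (hfR : ∀ u v, 0 ≤ fR u v)
    (hreb : ∀ v : V, (∑ u : V, fR u v) + (∑ m : M, if v = t m then lam m else 0) =
      (∑ w : V, fR v w) + (∑ m : M, if v = s m then lam m else 0))
    (hcap : ∀ u v, fR u v + (∑ m : M, f m u v) ≤ c u v)
    (S : Finset V) :
    (∑ m : M, ∑ u ∈ S, ∑ v ∈ Sᶜ, f m u v) ≤ (∑ u ∈ S, ∑ v ∈ Sᶜ, c u v) ∧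
    (∑ m : M, ∑ u ∈ S, ∑ v ∈ Sᶜ, f m u v) ≤ (∑ u ∈ Sᶜ, ∑ v ∈ S, c u v) := by
  set F : V → V → ℝ := fun u v => fR u v + ∑ m, f m u v
  have hcirc : IsCirculation F := isCirculation_add_sum f fR _ _ hcons hreb
  have hf_le_F : ∑ m, ∑ u ∈ S, ∑ v ∈ Sᶜ, f m u v ≤ ∑ u ∈ S, ∑ v ∈ Sᶜ, F u v := by
    rw [sum_comm]
    gcongr with u
    rw [sum_comm]
    gcongr with v
    exact le_add_of_nonneg_left (hfR u v)
  have hF_le_c (A B : Finset V) : ∑ u ∈ A, ∑ v ∈ B, F u v ≤ ∑ u ∈ A, ∑ v ∈ B, c u v := by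
    gcongr with u _ v
    exact hcap u v
  refine ⟨hf_le_F.trans (hF_le_c S Sᶜ), hf_le_F.trans ?_⟩
  rw [hcirc.sum_cut_out_eq_sum_cut_in S]
  exact hF_le_c Sᶜ S

/-- Upper bound for outflow: if feasible customer flows and a feasible rebalancing
flow exist, then for every cut the total customer outflow is bounded by both the
outgoing and the incoming capacity of the cut. -/
theorem stmt_6 {V M : Type*} [Fintype V] [DecidableEq V] [Fintype M]
    (c : V → V → ℝ) (hc : ∀ u v, 0 ≤ c u v)
    (f : M → V → V → ℝ) (hf : ∀ m u v, 0 ≤ f m u v)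
    (s t : M → V) (lam : M → ℝ)
    (hst : ∀ m, s m ≠ t m) (hlam : ∀ m, 0 < lam m)
    (hcons : ∀ m v, (∑ u : V, f m u v) + (if v = s m then lam m else 0) =
      (∑ w : V, f m v w) + (if v = t m then lam m else 0))
    (fR : V → V → ℝ) (hfR : ∀ u v, 0 ≤ fR u v)
    (hreb : ∀ v : V, (∑ u : V, fR u v) + (∑ m : M, if v = t m then lam m else 0) =
      (∑ w : V, fR v w) + (∑ m : M, if v = s m then lam m else 0))
    (hcap : ∀ u v, fR u v + (∑ m : M, f m u v) ≤ c u v)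
    (S : Finset V) :
    (∑ m : M, ∑ u ∈ S, ∑ v ∈ Sᶜ, f m u v) ≤ (∑ u ∈ S, ∑ v ∈ Sᶜ, c u v) ∧
    (∑ m : M, ∑ u ∈ S, ∑ v ∈ Sᶜ, f m u v) ≤ (∑ u ∈ Sᶜ, ∑ v ∈ S, c u v) :=
  stmt_6_general c f s t lam hcons fR hfR hreb hcap S
end

section
/- (Necessary cut condition for feasible flows) If there exist feasible customer flows f_m together with a feasible rebalancing flow f_R on a capacitated directed graph, then for every subset S ⊆ V both cut conditions hold: Σ_{m : s_m ∈ S, t_m ∉ S} λ_m ≤ C_out(S) and Σ_{m : s_m ∈ S, t_m ∉ S} λ_m ≤ C_in(S). -/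
/-!
Adding up all customer flows and the rebalancing flow gives a circulation: the sources of the
customers are the sinks of the rebalancing flow and vice versa. A circulation carries as much
across a cut inwards as outwards. Each customer whose source lies in `S` and whose sink does not
sends at least its rate out of `S`, so the common value of the two cut flows of the total flow,
and hence both cut capacities, dominate the sum of these rates.
-/

open Finset

section CutFlows

variable {V : Type*} [Fintype V] [DecidableEq V]

theorem sum_inflow_sub_outflow (g : V → V → ℝ) (S : Finset V) :
    ∑ v ∈ S, (∑ u, g u v - ∑ w, g v w) =
      ∑ u ∈ Sᶜ, ∑ v ∈ S, g u v - ∑ u ∈ S, ∑ v ∈ Sᶜ, g u v := by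
  have h_in : ∑ v ∈ S, ∑ u, g u v =
      ∑ u ∈ S, ∑ v ∈ S, g u v + ∑ u ∈ Sᶜ, ∑ v ∈ S, g u v := by
    rw [sum_comm, sum_add_sum_compl]
  have h_out : ∑ v ∈ S, ∑ w, g v w =
      ∑ u ∈ S, ∑ v ∈ S, g u v + ∑ u ∈ S, ∑ v ∈ Sᶜ, g u v := by
    rw [← sum_add_distrib]
    exact sum_congr rfl fun _ _ => (sum_add_sum_compl S _).symm
  rw [sum_sub_distrib, h_in, h_out]
  ring

theorem cut_in_eq_cut_out_of_circulation (g : V → V → ℝ)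
    (hg : ∀ v, ∑ u, g u v = ∑ w, g v w) (S : Finset V) :
    ∑ u ∈ Sᶜ, ∑ v ∈ S, g u v = ∑ u ∈ S, ∑ v ∈ Sᶜ, g u v := by
  have h := sum_inflow_sub_outflow g S
  simp only [hg, sub_self, sum_const_zero] at h
  linarith

theorem le_cut_out_of_flow (g : V → V → ℝ) (hg : ∀ u v, 0 ≤ g u v) (s t : V) (lam : ℝ)
    (hcons : ∀ v, ∑ u, g u v + (if v = s then lam else 0) =
      ∑ w, g v w + (if v = t then lam else 0))
    {S : Finset V} (hs : s ∈ S) (ht : t ∉ S) :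
    lam ≤ ∑ u ∈ S, ∑ v ∈ Sᶜ, g u v := by
  have h_net : ∑ v ∈ S, (∑ u, g u v - ∑ w, g v w) = -lam := by
    rw [sum_congr rfl fun v _ => (by linarith [hcons v] :
      ∑ u, g u v - ∑ w, g v w = (if v = t then lam else 0) - (if v = s then lam else 0))]
    simp [sum_sub_distrib, sum_ite_eq', hs, ht]
  have h_cut_in : 0 ≤ ∑ u ∈ Sᶜ, ∑ v ∈ S, g u v :=
    sum_nonneg fun u _ => sum_nonneg fun v _ => hg u v
  linarith [sum_inflow_sub_outflow g S]

end CutFlows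

theorem stmt_7_general {V M : Type*} [Fintype V] [DecidableEq V] [Fintype M]
    (c : V → V → ℝ)
    (f : M → V → V → ℝ) (hf : ∀ m u v, 0 ≤ f m u v)
    (s t : M → V) (lam : M → ℝ)
    (hcons : ∀ m v, (∑ u : V, f m u v) + (if v = s m then lam m else 0) =
      (∑ w : V, f m v w) + (if v = t m then lam m else 0))
    (fR : V → V → ℝ) (hfR : ∀ u v, 0 ≤ fR u v)
    (hreb : ∀ v : V, (∑ u : V, fR u v) + (∑ m : M, if v = t m then lam m else 0) =
      (∑ w : V, fR v w) + (∑ m : M, if v = s m then lam m else 0))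
    (hcap : ∀ u v, fR u v + (∑ m : M, f m u v) ≤ c u v)
    (S : Finset V) :
    (∑ m : M, if s m ∈ S ∧ t m ∉ S then lam m else 0) ≤ (∑ u ∈ S, ∑ v ∈ Sᶜ, c u v) ∧
    (∑ m : M, if s m ∈ S ∧ t m ∉ S then lam m else 0) ≤ (∑ u ∈ Sᶜ, ∑ v ∈ S, c u v) := by
  set F : V → V → ℝ := fun u v => fR u v + ∑ m, f m u v with hF
  have h_circ : ∀ v, ∑ u, F u v = ∑ w, F v w := by
    intro v
    have h := sum_congr rfl fun m (_ : m ∈ univ) => hcons m v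
    simp only [sum_add_distrib] at h
    simp only [hF, sum_add_distrib]
    rw [sum_comm (f := fun u m => f m u v), sum_comm (f := fun w m => f m v w)]
    linarith [hreb v]
  have h_customers : (∑ m, if s m ∈ S ∧ t m ∉ S then lam m else 0) ≤
      ∑ m, ∑ u ∈ S, ∑ v ∈ Sᶜ, f m u v := by
    gcongr with m
    split_ifs with hm
    · exact le_cut_out_of_flow (f m) (hf m) (s m) (t m) (lam m) (hcons m) hm.1 hm.2
    · exact sum_nonneg fun u _ => sum_nonneg fun v _ => hf m u v
  have h_out : ∑ m, ∑ u ∈ S, ∑ v ∈ Sᶜ, f m u v ≤ ∑ u ∈ S, ∑ v ∈ Sᶜ, F u v := by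
    rw [sum_comm]
    gcongr with u _
    rw [sum_comm]
    gcongr with v _
    exact le_add_of_nonneg_left (hfR u v)
  refine ⟨?_, ?_⟩
  · calc _ ≤ ∑ u ∈ S, ∑ v ∈ Sᶜ, F u v := h_customers.trans h_out
      _ ≤ _ := by gcongr with u _ v _; exact hcap u v
  · calc _ ≤ ∑ u ∈ Sᶜ, ∑ v ∈ S, F u v :=
          (h_customers.trans h_out).trans_eq (cut_in_eq_cut_out_of_circulation F h_circ S).symm
      _ ≤ _ := by gcongr with u _ v _; exact hcap u v

/-- Necessary cut condition for feasible flows: if feasible customer flows and a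
feasible rebalancing flow exist, then for every cut the total rate of requests
crossing the cut is bounded by both the outgoing and incoming capacity. -/
theorem stmt_7 {V M : Type*} [Fintype V] [DecidableEq V] [Fintype M]
    (c : V → V → ℝ) (hc : ∀ u v, 0 ≤ c u v)
    (f : M → V → V → ℝ) (hf : ∀ m u v, 0 ≤ f m u v)
    (s t : M → V) (lam : M → ℝ)
    (hst : ∀ m, s m ≠ t m) (hlam : ∀ m, 0 < lam m)
    (hcons : ∀ m v, (∑ u : V, f m u v) + (if v = s m then lam m else 0) =
      (∑ w : V, f m v w) + (if v = t m then lam m else 0))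
    (fR : V → V → ℝ) (hfR : ∀ u v, 0 ≤ fR u v)
    (hreb : ∀ v : V, (∑ u : V, fR u v) + (∑ m : M, if v = t m then lam m else 0) =
      (∑ w : V, fR v w) + (∑ m : M, if v = s m then lam m else 0))
    (hcap : ∀ u v, fR u v + (∑ m : M, f m u v) ≤ c u v)
    (S : Finset V) :
    (∑ m : M, if s m ∈ S ∧ t m ∉ S then lam m else 0) ≤ (∑ u ∈ S, ∑ v ∈ Sᶜ, c u v) ∧
    (∑ m : M, if s m ∈ S ∧ t m ∉ S then lam m else 0) ≤ (∑ u ∈ Sᶜ, ∑ v ∈ S, c u v) :=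
  stmt_7_general c f hf s t lam hcons fR hfR hreb hcap S
end

section
/- (Rebalancing does not increase congestion on symmetric networks) Let G be a capacity-symmetric directed graph with capacities c : V × V → ℝ≥0, and suppose there exists a set of feasible customer flows f_m (satisfying flow conservation and Σ_m f_m(u,v) ≤ c(u,v) for all edges). Then there exists a feasible rebalancing flow f_R : V × V → ℝ≥0 satisfying the rebalancing balance equation at every node and the joint capacity constraint f_R(u,v) + Σ_m f_m(u,v) ≤ c(u,v) for all (u,v). -/
/-! The rebalancing flow is the residual capacity `c - ∑ₘ fₘ`, nonnegative by feasibility.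
Capacity symmetry on the cut `{v}` says that `c`, viewed as a flow, is balanced at `v`; subtracting
the aggregate customer flow, whose net inflow at `v` is the demand ending at `v` minus the
demand starting at `v`, leaves a flow with exactly the opposite imbalance, which is the
rebalancing equation. -/

open Finset

section FlowBalance

variable {V R : Type*} [Fintype V]

theorem sum_apply_eq_sum_of_cut_singleton [DecidableEq V] [AddCommMonoid R] (c : V → V → R) (v : V)
    (hcut : ∑ u ∈ {v}, ∑ w ∈ {v}ᶜ, c u w = ∑ u ∈ {v}ᶜ, ∑ w ∈ {v}, c u w) :
    ∑ u, c u v = ∑ w, c v w := by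
  simp only [sum_singleton, compl_singleton] at hcut
  rw [← sum_erase_add _ _ (mem_univ v), ← hcut, sum_erase_add _ _ (mem_univ v)]

theorem sum_flow_balance {M : Type*} [Fintype M] [AddCommMonoid R] (f : M → V → V → R)
    (a b : M → R) (v : V) (hf : ∀ m, ∑ u, f m u v + a m = ∑ w, f m v w + b m) :
    ∑ u, ∑ m, f m u v + ∑ m, a m = ∑ w, ∑ m, f m v w + ∑ m, b m := by
  rw [sum_comm, ← sum_add_distrib, sum_comm (s := univ), ← sum_add_distrib]
  exact sum_congr rfl fun m _ => hf m

theorem sub_flow_balance [AddCommGroup R] (c F : V → V → R) (a b : R) (v : V)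
    (hc : ∑ u, c u v = ∑ w, c v w) (hF : ∑ u, F u v + a = ∑ w, F v w + b) :
    ∑ u, (c u v - F u v) + b = ∑ w, (c v w - F v w) + a := by
  rw [sum_sub_distrib, sum_sub_distrib, hc, eq_sub_of_add_eq hF]
  abel

end FlowBalance

theorem stmt_10_general {V M : Type*} [Fintype V] [DecidableEq V] [Fintype M]
    (c : V → V → ℝ)
    (hsym : ∀ S : Finset V, (∑ u ∈ S, ∑ v ∈ Sᶜ, c u v) = ∑ u ∈ Sᶜ, ∑ v ∈ S, c u v)
    (s t : M → V) (lam : M → ℝ)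
    (f : M → V → V → ℝ)
    (hcons : ∀ m v, (∑ u : V, f m u v) + (if v = s m then lam m else 0) =
      (∑ w : V, f m v w) + (if v = t m then lam m else 0))
    (hfcap : ∀ u v, (∑ m : M, f m u v) ≤ c u v) :
    ∃ fR : V → V → ℝ,
      (∀ u v, 0 ≤ fR u v) ∧
      (∀ v : V, (∑ u : V, fR u v) + (∑ m : M, if v = t m then lam m else 0) =
        (∑ w : V, fR v w) + (∑ m : M, if v = s m then lam m else 0)) ∧
      (∀ u v, fR u v + (∑ m : M, f m u v) ≤ c u v) := by
  refine ⟨fun u v => c u v - ∑ m, f m u v, fun u v => sub_nonneg.2 (hfcap u v), fun v => ?_,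
    fun u v => (sub_add_cancel _ _).le⟩
  exact sub_flow_balance c (fun u v => ∑ m, f m u v) _ _ v
    (sum_apply_eq_sum_of_cut_singleton c v (hsym {v})) (sum_flow_balance f _ _ v (hcons · v))

/-- Rebalancing does not increase congestion on capacity-symmetric networks:
given feasible customer flows, a feasible rebalancing flow always exists. -/
theorem stmt_10 {V M : Type*} [Fintype V] [DecidableEq V] [Fintype M]
    (c : V → V → ℝ) (hc : ∀ u v, 0 ≤ c u v)
    (hsym : ∀ S : Finset V, (∑ u ∈ S, ∑ v ∈ Sᶜ, c u v) = ∑ u ∈ Sᶜ, ∑ v ∈ S, c u v)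
    (s t : M → V) (lam : M → ℝ)
    (hst : ∀ m, s m ≠ t m) (hlam : ∀ m, 0 < lam m)
    (f : M → V → V → ℝ) (hf : ∀ m u v, 0 ≤ f m u v)
    (hcons : ∀ m v, (∑ u : V, f m u v) + (if v = s m then lam m else 0) =
      (∑ w : V, f m v w) + (if v = t m then lam m else 0))
    (hfcap : ∀ u v, (∑ m : M, f m u v) ≤ c u v) :
    ∃ fR : V → V → ℝ,
      (∀ u v, 0 ≤ fR u v) ∧
      (∀ v : V, (∑ u : V, fR u v) + (∑ m : M, if v = t m then lam m else 0) =
        (∑ w : V, fR v w) + (∑ m : M, if v = s m then lam m else 0)) ∧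
      (∀ u v, fR u v + (∑ m : M, f m u v) ≤ c u v) :=
  stmt_10_general c hsym s t lam f hcons hfcap
end

section
/- (Saturated-cut contradiction step) Let c be capacities on V × V, f_m feasible customer flows, and f̂_R a partial rebalancing flow that is not feasible. Suppose there is a subset S ⊆ V such that all defective destinations of f̂_R lie in S, all defective origins lie outside S, and every edge from S to its complement is saturated, i.e. f̂_R(u,v) + Σ_m f_m(u,v) = c(u,v) for all u ∈ S, v ∉ S. Then the incoming capacity strictly exceeds the outgoing capacity of the cut: C_in(S) > C_out(S); in particular the network is not capacity-symmetric. -/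
/-!
Write `e(v)` for the excess of `f̂_R` at `v` (inflow plus demand minus outflow minus supply).
Adding the customer flows, which are conserved up to the same demands and supplies, turns `e`
into the net inflow of the total flow `g = f̂_R + Σ f_m`, so `e` sums to zero over `V`. By the
choice of `S`, `e ≥ 0` on `S` and `e ≤ 0` off `S`; as some node is defective, `Σ_{v ∈ S} e(v) > 0`.
This sum is the `g`-flow into `S` minus the `g`-flow out of `S`; the latter equals `C_out(S)` by
saturation and the former is at most `C_in(S)`.
-/

open Finset

theorem Finset.sum_pos_of_sum_eq_zero_of_nonneg_of_nonpos_compl {ι α : Type*} [Fintype ι]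
    [DecidableEq ι] [AddCommGroup α] [LinearOrder α] [IsOrderedAddMonoid α] {e : ι → α} {S : Finset ι}
    (htot : ∑ i, e i = 0) (hS : ∀ i ∈ S, 0 ≤ e i) (hSc : ∀ i ∈ Sᶜ, e i ≤ 0)
    (hne : ∃ i, e i ≠ 0) : 0 < ∑ i ∈ S, e i := by
  by_contra! hle
  have hS0 : ∑ i ∈ S, e i = 0 := le_antisymm hle (sum_nonneg hS)
  have hSc0 : ∑ i ∈ Sᶜ, e i = 0 := by
    rwa [← sum_add_sum_compl S e, hS0, zero_add] at htot
  obtain ⟨i, hi⟩ := hne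
  by_cases h : i ∈ S
  · exact hi ((sum_eq_zero_iff_of_nonneg hS).1 hS0 i h)
  · exact hi ((sum_eq_zero_iff_of_nonpos hSc).1 hSc0 i (mem_compl.2 h))

section NetInflow

variable {V : Type*} [Fintype V]

def netInflow (g : V → V → ℝ) (v : V) : ℝ := ∑ u, g u v - ∑ w, g v w

lemma netInflow_add (g h : V → V → ℝ) (v : V) :
    netInflow (fun u w => g u w + h u w) v = netInflow g v + netInflow h v := by
  simp only [netInflow, sum_add_distrib]
  ring

lemma netInflow_sum {M : Type*} [Fintype M] (f : M → V → V → ℝ) (v : V) :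
    netInflow (fun u w => ∑ m, f m u w) v = ∑ m, netInflow (f m) v := by
  simp only [netInflow, sum_sub_distrib]
  rw [sum_comm, sum_comm (f := fun w m => f m v w)]

lemma sum_netInflow [DecidableEq V] (g : V → V → ℝ) (S : Finset V) :
    ∑ v ∈ S, netInflow g v = ∑ u ∈ Sᶜ, ∑ v ∈ S, g u v - ∑ u ∈ S, ∑ v ∈ Sᶜ, g u v := by
  have split : ∀ h : V → V → ℝ,
      ∑ v ∈ S, ∑ u, h u v = ∑ u ∈ S, ∑ v ∈ S, h u v + ∑ u ∈ Sᶜ, ∑ v ∈ S, h u v := fun h => by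
    rw [sum_comm, sum_add_sum_compl]
  have hin := split g
  have hout := split fun u v => g v u
  rw [sum_comm (s := S) (t := S)] at hout
  simp only [netInflow, sum_sub_distrib, hin, hout, sum_comm (s := Sᶜ) (t := S)]
  ring

lemma sum_netInflow_univ [DecidableEq V] (g : V → V → ℝ) : ∑ v, netInflow g v = 0 := by
  simpa using sum_netInflow g univ

lemma cut_lt_of_saturated [DecidableEq V] {g c : V → V → ℝ} {S : Finset V}
    (hcap : ∀ u ∈ Sᶜ, ∀ v ∈ S, g u v ≤ c u v) (hsat : ∀ u ∈ S, ∀ v ∈ Sᶜ, g u v = c u v)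
    (hin : 0 < ∑ v ∈ S, netInflow g v) :
    ∑ u ∈ S, ∑ v ∈ Sᶜ, c u v < ∑ u ∈ Sᶜ, ∑ v ∈ S, c u v := by
  have hout : ∑ u ∈ S, ∑ v ∈ Sᶜ, g u v = ∑ u ∈ S, ∑ v ∈ Sᶜ, c u v :=
    sum_congr rfl fun u hu => sum_congr rfl fun v hv => hsat u hu v hv
  have hin_le : ∑ u ∈ Sᶜ, ∑ v ∈ S, g u v ≤ ∑ u ∈ Sᶜ, ∑ v ∈ S, c u v :=
    sum_le_sum fun u hu => sum_le_sum fun v hv => hcap u hu v hv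
  rw [sum_netInflow] at hin
  linarith

end NetInflow

section Requests

variable {V M : Type*} [DecidableEq V] [Fintype M]

/-- `rateAt s lam v` is the supply `Σ_m λ_m·1[v = s_m]` at `v`, and `rateAt t lam v` the demand. -/
def rateAt (p : M → V) (lam : M → ℝ) (v : V) : ℝ := ∑ m, if v = p m then lam m else 0

lemma rateAt_eq_zero {p : M → V} (lam : M → ℝ) {v : V} (hv : ¬∃ m, p m = v) :
    rateAt p lam v = 0 :=
  sum_eq_zero fun m _ => if_neg fun h => hv ⟨m, h.symm⟩

variable [Fintype V]

lemma netInflow_sum_of_conservation {s t : M → V} {lam : M → ℝ} {f : M → V → V → ℝ} {v : V}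
    (hcons : ∀ m, (∑ u, f m u v) + (if v = s m then lam m else 0) =
      (∑ w, f m v w) + (if v = t m then lam m else 0)) :
    netInflow (fun u w => ∑ m, f m u w) v = rateAt t lam v - rateAt s lam v := by
  rw [netInflow_sum, rateAt, rateAt, ← sum_sub_distrib]
  exact sum_congr rfl fun m _ => by rw [netInflow]; linarith [hcons m]

variable {s t : M → V} {lam : M → ℝ} {fR : V → V → ℝ} {v : V}

lemma excess_nonneg_of_not_defective_origin
    (hdisj : ¬((∃ m, s m = v) ∧ (∃ m, t m = v)))
    (hmid : (¬∃ m, s m = v) → (¬∃ m, t m = v) → ∑ u, fR u v = ∑ w, fR v w)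
    (hdest : (∃ m, t m = v) → ∑ w, fR v w ≤ ∑ u, fR u v + rateAt t lam v)
    (horig : (∃ m, s m = v) → ¬(∑ u, fR u v < ∑ w, fR v w + rateAt s lam v)) :
    0 ≤ netInflow fR v + rateAt t lam v - rateAt s lam v := by
  unfold netInflow
  by_cases ho : ∃ m, s m = v
  · rw [rateAt_eq_zero lam fun hd => hdisj ⟨ho, hd⟩]
    linarith [not_lt.1 (horig ho)]
  · rw [rateAt_eq_zero lam ho]
    by_cases hd : ∃ m, t m = v
    · linarith [hdest hd]
    · rw [rateAt_eq_zero lam hd]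
      linarith [hmid ho hd]

lemma excess_nonpos_of_not_defective_destination
    (hdisj : ¬((∃ m, s m = v) ∧ (∃ m, t m = v)))
    (hmid : (¬∃ m, s m = v) → (¬∃ m, t m = v) → ∑ u, fR u v = ∑ w, fR v w)
    (horig : (∃ m, s m = v) → ∑ u, fR u v ≤ ∑ w, fR v w + rateAt s lam v)
    (hdest : (∃ m, t m = v) → ¬(∑ w, fR v w < ∑ u, fR u v + rateAt t lam v)) :
    netInflow fR v + rateAt t lam v - rateAt s lam v ≤ 0 := by
  unfold netInflow
  by_cases hd : ∃ m, t m = v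
  · rw [rateAt_eq_zero lam fun ho => hdisj ⟨ho, hd⟩]
    linarith [not_lt.1 (hdest hd)]
  · rw [rateAt_eq_zero lam hd]
    by_cases ho : ∃ m, s m = v
    · linarith [horig ho]
    · rw [rateAt_eq_zero lam ho]
      linarith [hmid ho hd]

end Requests

theorem stmt_11_general {V M : Type*} [Fintype V] [DecidableEq V] [Fintype M]
    (c : V → V → ℝ)
    (s t : M → V) (lam : M → ℝ)
    (hdisj : ∀ v : V, ¬((∃ m, s m = v) ∧ (∃ m, t m = v)))
    (f : M → V → V → ℝ)
    (hcons : ∀ m v, (∑ u : V, f m u v) + (if v = s m then lam m else 0) =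
      (∑ w : V, f m v w) + (if v = t m then lam m else 0))
    (fR : V → V → ℝ)
    (hmid : ∀ v : V, (¬∃ m, s m = v) → (¬∃ m, t m = v) →
      (∑ u : V, fR u v) = ∑ w : V, fR v w)
    (horig : ∀ v : V, (∃ m, s m = v) →
      (∑ u : V, fR u v) ≤ (∑ w : V, fR v w) + (∑ m : M, if v = s m then lam m else 0))
    (hdest : ∀ v : V, (∃ m, t m = v) →
      (∑ w : V, fR v w) ≤ (∑ u : V, fR u v) + (∑ m : M, if v = t m then lam m else 0))
    (hcap : ∀ u v, fR u v + (∑ m : M, f m u v) ≤ c u v)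
    (hnotfeas : ¬∀ v : V, (∑ u : V, fR u v) + (∑ m : M, if v = t m then lam m else 0) =
      (∑ w : V, fR v w) + (∑ m : M, if v = s m then lam m else 0))
    (S : Finset V)
    (hdestS : ∀ v : V, (∃ m, t m = v) →
      (∑ w : V, fR v w) < (∑ u : V, fR u v) + (∑ m : M, if v = t m then lam m else 0) →
      v ∈ S)
    (horigS : ∀ v : V, (∃ m, s m = v) →
      (∑ u : V, fR u v) < (∑ w : V, fR v w) + (∑ m : M, if v = s m then lam m else 0) →
      v ∉ S)
    (hsat : ∀ u ∈ S, ∀ v ∈ Sᶜ, fR u v + (∑ m : M, f m u v) = c u v) :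
    (∑ u ∈ S, ∑ v ∈ Sᶜ, c u v) < (∑ u ∈ Sᶜ, ∑ v ∈ S, c u v) ∧
    ¬(∀ T : Finset V, (∑ u ∈ T, ∑ v ∈ Tᶜ, c u v) = ∑ u ∈ Tᶜ, ∑ v ∈ T, c u v) := by
  set g : V → V → ℝ := fun u w => fR u w + ∑ m, f m u w
  have hexcess : ∀ v, netInflow g v = netInflow fR v + rateAt t lam v - rateAt s lam v :=
    fun v => by rw [netInflow_add, netInflow_sum_of_conservation (hcons · v)]; ring
  have hdefective : ∃ v, netInflow g v ≠ 0 := by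
    obtain ⟨v, hv⟩ := not_forall.1 hnotfeas
    refine ⟨v, fun h0 => hv ?_⟩
    rw [hexcess, netInflow] at h0
    simp only [rateAt] at h0
    linarith
  have hpos : 0 < ∑ v ∈ S, netInflow g v :=
    sum_pos_of_sum_eq_zero_of_nonneg_of_nonpos_compl (sum_netInflow_univ g)
      (fun v hv => hexcess v ▸ excess_nonneg_of_not_defective_origin (hdisj v) (hmid v)
        (hdest v) fun ho hlt => horigS v ho hlt hv)
      (fun v hv => hexcess v ▸ excess_nonpos_of_not_defective_destination (hdisj v) (hmid v)
        (horig v) fun hd hlt => mem_compl.1 hv (hdestS v hd hlt))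
      hdefective
  have hlt := cut_lt_of_saturated (fun u _ v _ => hcap u v) hsat hpos
  exact ⟨hlt, fun hsym => hlt.ne (hsym S)⟩

/-- Saturated-cut contradiction step: if a partial rebalancing flow that is not
feasible admits a cut S containing all defective destinations, excluding all
defective origins, and all of whose outgoing edges are saturated, then the incoming
capacity strictly exceeds the outgoing capacity of the cut; in particular the
network is not capacity-symmetric. -/
theorem stmt_11 {V M : Type*} [Fintype V] [DecidableEq V] [Fintype M]
    (c : V → V → ℝ) (hc : ∀ u v, 0 ≤ c u v)
    (s t : M → V) (lam : M → ℝ) (hlam : ∀ m, 0 < lam m)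
    (hdisj : ∀ v : V, ¬((∃ m, s m = v) ∧ (∃ m, t m = v)))
    (f : M → V → V → ℝ) (hf : ∀ m u v, 0 ≤ f m u v)
    (hcons : ∀ m v, (∑ u : V, f m u v) + (if v = s m then lam m else 0) =
      (∑ w : V, f m v w) + (if v = t m then lam m else 0))
    (fR : V → V → ℝ) (hfR : ∀ u v, 0 ≤ fR u v)
    (hmid : ∀ v : V, (¬∃ m, s m = v) → (¬∃ m, t m = v) →
      (∑ u : V, fR u v) = ∑ w : V, fR v w)
    (horig : ∀ v : V, (∃ m, s m = v) →
      (∑ u : V, fR u v) ≤ (∑ w : V, fR v w) + (∑ m : M, if v = s m then lam m else 0))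
    (hdest : ∀ v : V, (∃ m, t m = v) →
      (∑ w : V, fR v w) ≤ (∑ u : V, fR u v) + (∑ m : M, if v = t m then lam m else 0))
    (hcap : ∀ u v, fR u v + (∑ m : M, f m u v) ≤ c u v)
    (hnotfeas : ¬∀ v : V, (∑ u : V, fR u v) + (∑ m : M, if v = t m then lam m else 0) =
      (∑ w : V, fR v w) + (∑ m : M, if v = s m then lam m else 0))
    (S : Finset V)
    (hdestS : ∀ v : V, (∃ m, t m = v) →
      (∑ w : V, fR v w) < (∑ u : V, fR u v) + (∑ m : M, if v = t m then lam m else 0) →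
      v ∈ S)
    (horigS : ∀ v : V, (∃ m, s m = v) →
      (∑ u : V, fR u v) < (∑ w : V, fR v w) + (∑ m : M, if v = s m then lam m else 0) →
      v ∉ S)
    (hsat : ∀ u ∈ S, ∀ v ∈ Sᶜ, fR u v + (∑ m : M, f m u v) = c u v) :
    (∑ u ∈ S, ∑ v ∈ Sᶜ, c u v) < (∑ u ∈ Sᶜ, ∑ v ∈ S, c u v) ∧
    ¬(∀ T : Finset V, (∑ u ∈ T, ∑ v ∈ Tᶜ, c u v) = ∑ u ∈ Tᶜ, ∑ v ∈ T, c u v) :=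
  stmt_11_general c s t lam hdisj f hcons fR hmid horig hdest hcap hnotfeas S hdestS horigS hsat
end

section
/- (Integral version) Let G be a capacity-symmetric directed graph with integer capacities c : V × V → ℕ, and suppose there exist feasible integer-valued customer flows f_m : V × V → ℕ (satisfying flow conservation with integer rates λ_m ∈ ℕ and Σ_m f_m(u,v) ≤ c(u,v)). Then there exists an integer-valued feasible rebalancing flow f_R : V × V → ℕ satisfying the rebalancing balance equation and f_R(u,v) + Σ_m f_m(u,v) ≤ c(u,v) for all (u,v). -/
/-!
The residual capacity `c u v - ∑ m, f m u v` is itself a rebalancing flow. Capacity symmetry on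
the singleton cut `{v}` says that `c` has equal inflow and outflow at `v`, while summing the
customer conservation laws shows that the aggregated customer flow has net outflow at `v` equal to
the customer supply there minus the customer demand. Subtracting, the residual capacity has
exactly the net outflow that the rebalancing balance equation prescribes.
-/

open Finset

theorem sum_in_eq_sum_out_of_singleton_cut {V α : Type*} [Fintype V] [DecidableEq V]
    [AddCommMonoid α] (c : V → V → α) (v : V)
    (hcut : ∑ u ∈ {v}, ∑ w ∈ {v}ᶜ, c u w = ∑ u ∈ {v}ᶜ, ∑ w ∈ {v}, c u w) :
    ∑ u, c u v = ∑ w, c v w := by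
  simp only [sum_singleton] at hcut
  rw [← sum_compl_add_sum {v}, ← sum_compl_add_sum {v} (c v), ← hcut, sum_singleton,
    sum_singleton]

theorem sum_conservation {V M α : Type*} [Fintype V] [Fintype M] [AddCommMonoid α]
    (f : M → V → V → α) (supply demand : M → α) (v : V)
    (hcons : ∀ m, ∑ u, f m u v + supply m = ∑ w, f m v w + demand m) :
    ∑ u, ∑ m, f m u v + ∑ m, supply m = ∑ w, ∑ m, f m v w + ∑ m, demand m := by
  rw [sum_comm, sum_comm (f := fun w m => f m v w), ← sum_add_distrib, ← sum_add_distrib]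
  exact sum_congr rfl fun m _ => hcons m

theorem residual_conservation {V : Type*} [Fintype V] (c F : V → V → ℕ) (v : V) (a b : ℕ)
    (hc : ∑ u, c u v = ∑ w, c v w) (hF : ∑ u, F u v + a = ∑ w, F v w + b)
    (hle : ∀ u w, F u w ≤ c u w) :
    ∑ u, (c u v - F u v) + b = ∑ w, (c v w - F v w) + a := by
  have hin : ∑ u, F u v ≤ ∑ u, c u v := sum_le_sum fun u _ => hle u v
  have hout : ∑ w, F v w ≤ ∑ w, c v w := sum_le_sum fun w _ => hle v w
  rw [sum_tsub_distrib _ fun u _ => hle u v, sum_tsub_distrib _ fun w _ => hle v w]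
  omega

theorem stmt_12_general {V M : Type*} [Fintype V] [DecidableEq V] [Fintype M]
    (c : V → V → ℕ)
    (hsym : ∀ S : Finset V, (∑ u ∈ S, ∑ v ∈ Sᶜ, c u v) = ∑ u ∈ Sᶜ, ∑ v ∈ S, c u v)
    (s t : M → V) (lam : M → ℕ)
    (f : M → V → V → ℕ)
    (hcons : ∀ m v, (∑ u : V, f m u v) + (if v = s m then lam m else 0) =
      (∑ w : V, f m v w) + (if v = t m then lam m else 0))
    (hfcap : ∀ u v, (∑ m : M, f m u v) ≤ c u v) :
    ∃ fR : V → V → ℕ,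
      (∀ v : V, (∑ u : V, fR u v) + (∑ m : M, if v = t m then lam m else 0) =
        (∑ w : V, fR v w) + (∑ m : M, if v = s m then lam m else 0)) ∧
      (∀ u v, fR u v + (∑ m : M, f m u v) ≤ c u v) := by
  refine ⟨fun u v => c u v - ∑ m, f m u v, fun v => ?_,
    fun u v => (Nat.sub_add_cancel (hfcap u v)).le⟩
  exact residual_conservation c (fun u w => ∑ m, f m u w) v _ _
    (sum_in_eq_sum_out_of_singleton_cut c v (hsym {v}))
    (sum_conservation f _ _ v fun m => hcons m v) hfcap

/-- Integral version: on a capacity-symmetric network with integer capacities, given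
feasible integer-valued customer flows, an integer-valued feasible rebalancing flow
always exists. -/
theorem stmt_12 {V M : Type*} [Fintype V] [DecidableEq V] [Fintype M]
    (c : V → V → ℕ)
    (hsym : ∀ S : Finset V, (∑ u ∈ S, ∑ v ∈ Sᶜ, c u v) = ∑ u ∈ Sᶜ, ∑ v ∈ S, c u v)
    (s t : M → V) (lam : M → ℕ)
    (hst : ∀ m, s m ≠ t m) (hlam : ∀ m, 0 < lam m)
    (f : M → V → V → ℕ)
    (hcons : ∀ m v, (∑ u : V, f m u v) + (if v = s m then lam m else 0) =
      (∑ w : V, f m v w) + (if v = t m then lam m else 0))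
    (hfcap : ∀ u v, (∑ m : M, f m u v) ≤ c u v) :
    ∃ fR : V → V → ℕ,
      (∀ v : V, (∑ u : V, fR u v) + (∑ m : M, if v = t m then lam m else 0) =
        (∑ w : V, fR v w) + (∑ m : M, if v = s m then lam m else 0)) ∧
      (∀ u v, fR u v + (∑ m : M, f m u v) ≤ c u v) :=
  stmt_12_general c hsym s t lam f hcons hfcap
end
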